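/- Under an M-optimal (or W-optimal) stable matching algorithm, any matching that is asymptotically stable under payoff-positive selection dynamics (i.e., admits a partial preimage closed under weakly better replies) is a stable matching with respect to the true preferences. -/

import Mathlib

open scoped Classical

/-- A marriage problem's (strict) preference profile, given by injective rank
functions over potential partners plus the option `none` of staying single
(lower rank = more preferred). -/
structure Pref (M W : Type) where
  mrank : M → Option W → ℕ
  wrank : W → Option M → ℕ
  minj : ∀ a x y, mrank a x = mrank a y → x = y
  winj : ∀ b x y, wrank b x = wrank b y → x = y

/-- A one-to-one matching between `M` and `W` (with `none` = single). -/
structure Matching (M W : Type) where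
  mu : M → Option W
  nu : W → Option M
  consistent : ∀ a b, mu a = some b ↔ nu b = some a

/-- No player strictly prefers being single to the assigned partner. -/
def IndivRational {M W : Type} (P : Pref M W) (μ : Matching M W) : Prop :=
  (∀ a, ¬ P.mrank a none < P.mrank a (μ.mu a)) ∧
  (∀ b, ¬ P.wrank b none < P.wrank b (μ.nu b))

/-- The pair `(a, b)` blocks `μ`. -/
def Blocks {M W : Type} (P : Pref M W) (μ : Matching M W) (a : M) (b : W) : Prop :=
  P.mrank a (some b) < P.mrank a (μ.mu a) ∧ P.wrank b (some a) < P.wrank b (μ.nu b)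

/-- Stability: individual rationality together with absence of blocking pairs. -/
def StableMatching {M W : Type} (P : Pref M W) (μ : Matching M W) : Prop :=
  IndivRational P μ ∧ ∀ a b, ¬ Blocks P μ a b

noncomputable section

variable {M W : Type} [Fintype M] [Fintype W]

/-- `b` is acceptable to man `a`. -/
def mAcc (P : Pref M W) (a : M) (b : W) : Prop := P.mrank a (some b) < P.mrank a none

/-- `a` is acceptable to woman `b`. -/
def wAcc (P : Pref M W) (b : W) (a : M) : Prop := P.wrank b (some a) < P.wrank b none

/-- The state of the man-proposing deferred acceptance algorithm:
for each man, the index of the next woman on his list to propose to,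
and for each woman, the proposer she currently (tentatively) holds. -/
structure DAState (M W : Type) where
  next : M → ℕ
  hold : W → Option M

/-- A man is free if no woman currently holds him. -/
def IsFree (s : DAState M W) (a : M) : Prop := ∀ b, s.hold b ≠ some a

/-- The `k`-th woman (0-indexed) on man `a`'s list of acceptable women,
in decreasing order of preference. -/
def target (P : Pref M W) (a : M) (k : ℕ) : Option W :=
  if h : ∃ b : W, mAcc P a b ∧
      (Finset.univ.filter fun b' => mAcc P a b' ∧
        P.mrank a (some b') < P.mrank a (some b)).card = k
  then some h.choose else none

/-- Woman `b`'s most preferred acceptable man in the finite set `c` (if any). -/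
def best (P : Pref M W) (b : W) (c : Finset M) : Option M :=
  if h : ∃ a ∈ c, wAcc P b a ∧ ∀ a' ∈ c, wAcc P b a' → P.wrank b (some a) ≤ P.wrank b (some a')
  then some h.choose else none

/-- One round of the man-proposing deferred acceptance algorithm: every free
man proposes to the next woman on his list; every woman holds the best
acceptable man among her current proposers and the man she held before. -/
def daStep (P : Pref M W) (s : DAState M W) : DAState M W where
  next a := if IsFree s a ∧ (target P a (s.next a)).isSome then s.next a + 1 else s.next a
  hold b := best P b
    ((Finset.univ.filter fun a => IsFree s a ∧ target P a (s.next a) = some b) ∪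
      (s.hold b).toFinset)

/-- The algorithm terminates when no free man has anyone left to propose to. -/
def Finished (P : Pref M W) (s : DAState M W) : Prop :=
  ∀ a, IsFree s a → target P a (s.next a) = none

/-- Iterate the deferred acceptance rounds (with fuel). -/
def daRun (P : Pref M W) : ℕ → DAState M W → DAState M W
  | 0, s => s
  | n + 1, s => if Finished P s then s else daRun P n (daStep P s)

/-- The initial state: every man is free and about to propose to his favorite. -/
def daInit : DAState M W := ⟨fun _ => 0, fun _ => none⟩

/-- The final state of the man-proposing deferred acceptance algorithm
(the fuel is enough for the algorithm to have terminated). -/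
def daFinal (P : Pref M W) : DAState M W :=
  daRun P (Fintype.card M * (Fintype.card W + 1) + 1) daInit

/-- The partner of woman `b` under the man-proposing DA matching. -/
def daNu (P : Pref M W) (b : W) : Option M := (daFinal P).hold b

/-- The partner of man `a` under the man-proposing DA matching. -/
def daMu (P : Pref M W) (a : M) : Option W :=
  if h : ∃ b, (daFinal P).hold b = some a then some h.choose else none

/-- Man `a` proposes to woman `b` at some point during the run of the
man-proposing deferred acceptance algorithm. -/
def Proposes (P : Pref M W) (a : M) (b : W) : Prop :=
  ∃ n, IsFree (daRun P n daInit) a ∧ target P a ((daRun P n daInit).next a) = some b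

end

noncomputable section RevelationGame

variable (M W : Type) [Fintype M] [Fintype W] [DecidableEq M] [DecidableEq W]

/-- Pure strategies in the preference revelation game: a player submits a
strict ranking of the opposite side together with the option of being single. -/
abbrev Strat : M ⊕ W → Type := fun i =>
  match i with
  | Sum.inl _ => Option W ≃ Fin (Fintype.card W + 1)
  | Sum.inr _ => Option M ≃ Fin (Fintype.card M + 1)

instance instStratFintype : ∀ i : M ⊕ W, Fintype (Strat M W i)
  | Sum.inl _ => inferInstanceAs (Fintype (Option W ≃ Fin (Fintype.card W + 1)))
  | Sum.inr _ => inferInstanceAs (Fintype (Option M ≃ Fin (Fintype.card M + 1)))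

variable {M W}

/-- The preference profile induced by a report profile. -/
def reportPref (r : ∀ i : M ⊕ W, Strat M W i) : Pref M W where
  mrank a o := ((r (Sum.inl a)) o : ℕ)
  wrank b o := ((r (Sum.inr b)) o : ℕ)
  minj a _ _ h := (r (Sum.inl a)).injective (Fin.val_injective h)
  winj b _ _ h := (r (Sum.inr b)).injective (Fin.val_injective h)

/-- A mixed strategy profile: one probability distribution per player. -/
def IsMixed (x : ∀ i : M ⊕ W, Strat M W i → ℝ) : Prop :=
  ∀ i, (∀ h, 0 ≤ x i h) ∧ ∑ h, x i h = 1

/-- The mixed profile `x` is supported on the product set `H`. -/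
def SupportedOn (x : ∀ i : M ⊕ W, Strat M W i → ℝ)
    (H : ∀ i : M ⊕ W, Set (Strat M W i)) : Prop :=
  ∀ i h, x i h ≠ 0 → h ∈ H i

/-- Expected payoff to player `i` under a mixed strategy profile `x`. -/
def expPay (π : ∀ _ : M ⊕ W, (∀ j : M ⊕ W, Strat M W j) → ℝ) (i : M ⊕ W)
    (x : ∀ j : M ⊕ W, Strat M W j → ℝ) : ℝ :=
  ∑ s : ∀ j : M ⊕ W, Strat M W j, (∏ j, x j (s j)) * π i s

/-- The Dirac (pure) mixed strategy on `h`. -/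
def delta {i : M ⊕ W} (h : Strat M W i) : Strat M W i → ℝ :=
  fun t => if t = h then 1 else 0

/-- `H` is closed under weakly better replies: any pure strategy of a player
that earns at least the average payoff against some mixed profile supported on
`H` already belongs to the player's component of `H`. -/
def CUWBR (π : ∀ _ : M ⊕ W, (∀ j : M ⊕ W, Strat M W j) → ℝ)
    (H : ∀ i : M ⊕ W, Set (Strat M W i)) : Prop :=
  ∀ (i : M ⊕ W) (h : Strat M W i),
    (∃ x, IsMixed x ∧ SupportedOn x H ∧
      expPay π i x ≤ expPay π i (Function.update x i (delta h))) → h ∈ H i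

/-- Payoffs of the preference revelation game induced by the man-proposing
deferred acceptance algorithm: each player's payoff is a strictly decreasing
function of the true-preference rank of the partner assigned by DA run on the
reported profile. -/
def daPayoff (P : Pref M W) (um : M → ℕ → ℝ) (uw : W → ℕ → ℝ) :
    ∀ _ : M ⊕ W, (∀ j : M ⊕ W, Strat M W j) → ℝ := fun i r =>
  match i with
  | Sum.inl a => um a (P.mrank a (daMu (reportPref r) a))
  | Sum.inr b => uw b (P.wrank b (daNu (reportPref r) b))

end RevelationGame

/-- `μ` is the M-optimal stable matching for `P`. -/
def IsMOptimalStable {M W : Type} (P : Pref M W) (μ : Matching M W) : Prop :=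
  StableMatching P μ ∧
    ∀ ν, StableMatching P ν → ∀ a, P.mrank a (μ.mu a) ≤ P.mrank a (ν.mu a)

/-- `μ` is the W-optimal stable matching for `P`. -/
def IsWOptimalStable {M W : Type} (P : Pref M W) (μ : Matching M W) : Prop :=
  StableMatching P μ ∧
    ∀ ν, StableMatching P ν → ∀ b, P.wrank b (μ.nu b) ≤ P.wrank b (ν.nu b)

/-- Payoffs of the preference revelation game induced by an arbitrary matching
algorithm `Γ`. -/
noncomputable def algPayoff {M W : Type} [Fintype M] [Fintype W]
    (Γ : (∀ i : M ⊕ W, Strat M W i) → Matching M W)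
    (P : Pref M W) (um : M → ℕ → ℝ) (uw : W → ℕ → ℝ) :
    ∀ _ : M ⊕ W, (∀ j : M ⊕ W, Strat M W j) → ℝ := fun i r =>
  match i with
  | Sum.inl a => um a (P.mrank a ((Γ r).mu a))
  | Sum.inr b => uw b (P.wrank b ((Γ r).nu b))

/-!
Pure profiles in `H` are mixed profiles supported on `H`, so a unilateral deviation from a
profile in `H` that does not hurt the deviator stays in `H` and still produces `μ`.
If `μ` were not individually rational for `a`, ranking `none` first would be such a deviation,
and it leaves `a` single. If `(a, b)` blocked `μ`, then in a profile of `H` one of them, say `b`,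
does not report preferring `a` to her `μ`-partner. Then `a` reports `b` first and his `μ`-partner
second: `μ` stays stable, so `M`-optimality (or `W`-optimality and the lone-wolf theorem) gives
`a` either `b` or his `μ`-partner, and the deviation stays in `H`. Now `b` reports `a` first:
`a` and `b` are mutual first choices, hence matched, which strictly improves `b`; so this
deviation stays in `H` as well, yet does not produce `μ`.
-/

theorem exists_equiv_fin_apply_eq {α : Type*} [Fintype α] {n k : ℕ}
    (hα : Fintype.card α = n) {f : Fin k → α} (hf : Function.Injective f) :
    ∃ e : α ≃ Fin n, ∀ i, (e (f i) : ℕ) = i := by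
  have hk : k ≤ n := hα ▸ by simpa using Fintype.card_le_of_injective f hf
  let e₀ := Fintype.equivFinOfCardEq hα
  obtain ⟨σ, hσ⟩ :=
    Equiv.Perm.exists_extending_pair f (fun i => e₀.symm (Fin.castLE hk i)) hf
    (e₀.symm.injective.comp (Fin.castLE_injective hk))
  exact ⟨σ.trans e₀, fun i => by simp [hσ]⟩

theorem exists_rank_eq_zero {T : Type*} [Fintype T] (x : Option T) :
    ∃ e : Option T ≃ Fin (Fintype.card T + 1), (e x : ℕ) = 0 := by
  obtain ⟨e, he⟩ := exists_equiv_fin_apply_eq Fintype.card_option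
    (f := ![x]) (Function.injective_of_subsingleton _)
  exact ⟨e, he 0⟩

theorem exists_rank_eq_zero_eq_one {T : Type*} [Fintype T] {x y : Option T} (hxy : x ≠ y)
    (hx : x ≠ none) :
    ∃ e : Option T ≃ Fin (Fintype.card T + 1),
      (e x : ℕ) = 0 ∧ (e y : ℕ) = 1 ∧ (e y : ℕ) ≤ e none ∧ (e none : ℕ) ≤ 2 := by
  by_cases hy : y = none
  · subst hy
    obtain ⟨e, he⟩ := exists_equiv_fin_apply_eq Fintype.card_option (f := ![x, none])
      (by intro i j; fin_cases i <;> fin_cases j <;> simp [hx, Ne.symm hx])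
    exact ⟨e, he 0, he 1, le_rfl, (he 1).trans_le (by norm_num)⟩
  · obtain ⟨e, he⟩ := exists_equiv_fin_apply_eq Fintype.card_option (f := ![x, y, none])
      (by
        intro i j
        fin_cases i <;> fin_cases j <;> simp [hxy, hxy.symm, hx, hy, Ne.symm hx, Ne.symm hy])
    have hey : (e y : ℕ) = 1 := he 1
    have hen : (e none : ℕ) = 2 := he 2
    exact ⟨e, he 0, hey, by omega, by omega⟩

namespace Pref

variable {M W : Type} (P : Pref M W)

def flip : Pref W M := ⟨P.wrank, P.mrank, P.winj, P.minj⟩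

theorem mrank_lt_of_le_of_ne {a : M} {x y : Option W} (h : P.mrank a x ≤ P.mrank a y)
    (hne : x ≠ y) : P.mrank a x < P.mrank a y :=
  h.lt_of_ne fun h' => hne (P.minj a x y h')

theorem wrank_lt_of_le_of_ne {b : W} {x y : Option M} (h : P.wrank b x ≤ P.wrank b y)
    (hne : x ≠ y) : P.wrank b x < P.wrank b y :=
  P.flip.mrank_lt_of_le_of_ne h hne

end Pref

namespace Matching

variable {M W : Type} (μ : Matching M W)

def flip : Matching W M := ⟨μ.nu, μ.mu, fun b a => (μ.consistent a b).symm⟩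

theorem nu_eq_some_iff {a : M} {b : W} : μ.nu b = some a ↔ μ.mu a = some b :=
  (μ.consistent a b).symm

theorem eq_of_nu_eq {b b' : W} (h : μ.nu b = μ.nu b') (hb : μ.nu b ≠ none) : b = b' := by
  obtain ⟨a, ha⟩ := Option.ne_none_iff_exists'.mp hb
  exact Option.some_injective _ <|
    ((μ.nu_eq_some_iff.mp ha).symm.trans (μ.nu_eq_some_iff.mp (h ▸ ha)))

end Matching

namespace StableMatching

variable {M W : Type} {P : Pref M W} {μ ν : Matching M W}

theorem flip (h : StableMatching P μ) : StableMatching P.flip μ.flip :=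
  ⟨⟨h.1.2, h.1.1⟩, fun b a hb => h.2 a b ⟨hb.2, hb.1⟩⟩

theorem of_flip (h : StableMatching P.flip μ.flip) : StableMatching P μ :=
  h.flip

theorem mrank_le_none (h : StableMatching P μ) (a : M) : P.mrank a (μ.mu a) ≤ P.mrank a none :=
  le_of_not_gt (h.1.1 a)

theorem wrank_le_none (h : StableMatching P μ) (b : W) : P.wrank b (μ.nu b) ≤ P.wrank b none :=
  le_of_not_gt (h.1.2 b)

theorem nu_eq_of_rank_eq_zero (h : StableMatching P μ) {a : M} {b : W}
    (ha : P.mrank a (some b) = 0) (hb : P.wrank b (some a) = 0) : μ.nu b = some a := by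
  by_contra hne
  have hμa : μ.mu a ≠ some b := fun h' => hne (μ.nu_eq_some_iff.mpr h')
  refine h.2 a b ⟨?_, ?_⟩
  · exact P.mrank_lt_of_le_of_ne (ha ▸ Nat.zero_le _) hμa.symm
  · exact P.wrank_lt_of_le_of_ne (hb ▸ Nat.zero_le _) (Ne.symm hne)

theorem exists_wrank_lt_of_wrank_lt (hμ : StableMatching P μ) (hν : StableMatching P ν)
    (hle : ∀ c, P.mrank c (ν.mu c) ≤ P.mrank c (μ.mu c)) {w : W} (hw : μ.nu w ≠ none)
    (hlt : P.wrank w (μ.nu w) < P.wrank w (ν.nu w)) :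
    ∃ w', (μ.nu w' ≠ none ∧ P.wrank w' (μ.nu w') < P.wrank w' (ν.nu w')) ∧
      ν.nu w' = μ.nu w := by
  obtain ⟨c, hc⟩ := Option.ne_none_iff_exists'.mp hw
  have hμc : μ.mu c = some w := μ.nu_eq_some_iff.mp hc
  have hνc : ν.mu c ≠ some w := fun h => by
    rw [ν.nu_eq_some_iff.mpr h, hc] at hlt
    exact lt_irrefl _ hlt
  have hc_lt : P.mrank c (ν.mu c) < P.mrank c (μ.mu c) :=
    P.mrank_lt_of_le_of_ne (hle c) (hμc ▸ hνc)
  have hνc_ne : ν.mu c ≠ none := fun h => by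
    have := hμ.mrank_le_none c
    rw [h] at hc_lt
    omega
  obtain ⟨w', hw'⟩ := Option.ne_none_iff_exists'.mp hνc_ne
  have hν' : ν.nu w' = some c := ν.nu_eq_some_iff.mpr hw'
  have hw'_lt : P.wrank w' (μ.nu w') < P.wrank w' (some c) := by
    refine P.wrank_lt_of_le_of_ne (le_of_not_gt fun h => hμ.2 c w' ⟨hw' ▸ hc_lt, h⟩)
      fun h => ?_
    rw [μ.nu_eq_some_iff, hμc, Option.some_inj] at h
    exact hνc (h ▸ hw')
  refine ⟨w', ⟨fun h => ?_, hν' ▸ hw'_lt⟩, hν'.trans hc.symm⟩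
  have := hν.wrank_le_none w'
  rw [hν'] at this
  rw [h] at hw'_lt
  omega

/-- Lone-wolf theorem. The step above maps the finite set of women who strictly prefer their
`μ`-partner to their `ν`-partner injectively into itself; a woman single under `ν` but not under
`μ` would lie in this set outside the image. -/
theorem nu_ne_none_of_mrank_le [Finite W] (hμ : StableMatching P μ) (hν : StableMatching P ν)
    (hle : ∀ c, P.mrank c (ν.mu c) ≤ P.mrank c (μ.mu c)) {b : W} (hb : μ.nu b ≠ none) :
    ν.nu b ≠ none := by
  let Q : W → Prop := fun w => μ.nu w ≠ none ∧ P.wrank w (μ.nu w) < P.wrank w (ν.nu w)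
  choose φ hφQ hφ using fun w (hw : Q w) => hμ.exists_wrank_lt_of_wrank_lt hν hle hw.1 hw.2
  let φ' : {w // Q w} → {w // Q w} := fun w => ⟨φ w.1 w.2, hφQ w.1 w.2⟩
  have hinj : Function.Injective φ' := fun w₁ w₂ h => by
    have hφ_eq : φ w₁.1 w₁.2 = φ w₂.1 w₂.2 := congrArg Subtype.val h
    exact Subtype.ext <|
      μ.eq_of_nu_eq ((hφ w₁.1 w₁.2).symm.trans (hφ_eq ▸ hφ w₂.1 w₂.2)) w₁.2.1
  intro hνb
  have hQb : Q b := ⟨hb, hνb ▸ P.wrank_lt_of_le_of_ne (hμ.wrank_le_none b) hb⟩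
  obtain ⟨w, hw⟩ := Finite.injective_iff_surjective.mp hinj ⟨b, hQb⟩
  have hνw := hφ w.1 w.2
  rw [show φ w.1 w.2 = b from congrArg Subtype.val hw, hνb] at hνw
  exact w.2.1 hνw.symm

theorem mu_ne_none_of_wrank_le [Finite M] (hμ : StableMatching P μ) (hν : StableMatching P ν)
    (hle : ∀ w, P.wrank w (ν.nu w) ≤ P.wrank w (μ.nu w)) {a : M} (ha : μ.mu a ≠ none) :
    ν.mu a ≠ none :=
  hμ.flip.nu_ne_none_of_mrank_le hν.flip hle ha

theorem of_mrank_agree {P' : Pref M W} (hμ : StableMatching P μ) {a : M}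
    (hw : P'.wrank = P.wrank) (hm : ∀ c, c ≠ a → P'.mrank c = P.mrank c)
    (hIR : P'.mrank a (μ.mu a) ≤ P'.mrank a none)
    (hblock : ∀ b, P'.mrank a (some b) < P'.mrank a (μ.mu a) →
      P.wrank b (μ.nu b) ≤ P.wrank b (some a)) :
    StableMatching P' μ := by
  refine ⟨⟨fun c => ?_, fun b => hw ▸ hμ.1.2 b⟩, fun c b ⟨hc, hb⟩ => ?_⟩
  · by_cases hca : c = a
    · exact hca ▸ not_lt.mpr hIR
    · exact hm c hca ▸ hμ.1.1 c
  · rw [hw] at hb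
    by_cases hca : c = a
    · subst hca
      exact absurd hb (not_lt.mpr (hblock b hc))
    · exact hμ.2 c b ⟨hm c hca ▸ hc, hb⟩

theorem of_wrank_agree {P' : Pref M W} (hμ : StableMatching P μ) {b : W}
    (hm : P'.mrank = P.mrank) (hw : ∀ d, d ≠ b → P'.wrank d = P.wrank d)
    (hIR : P'.wrank b (μ.nu b) ≤ P'.wrank b none)
    (hblock : ∀ a, P'.wrank b (some a) < P'.wrank b (μ.nu b) →
      P.mrank a (μ.mu a) ≤ P.mrank a (some b)) :
    StableMatching P' μ :=
  of_flip (hμ.flip.of_mrank_agree (P' := P'.flip) hm hw hIR hblock)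

theorem mu_eq_or_eq_of_ranks [Finite M] (hμ : StableMatching P μ) (hν : StableMatching P ν)
    (hopt : (∀ c, P.mrank c (ν.mu c) ≤ P.mrank c (μ.mu c)) ∨
      ∀ w, P.wrank w (ν.nu w) ≤ P.wrank w (μ.nu w))
    {a : M} {x : Option W} (hx : P.mrank a x = 0) (hμa : P.mrank a (μ.mu a) = 1)
    (hnone : P.mrank a none ≤ 2) : ν.mu a = x ∨ ν.mu a = μ.mu a := by
  have of_le_one : P.mrank a (ν.mu a) ≤ 1 → ν.mu a = x ∨ ν.mu a = μ.mu a := fun h =>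
    (Nat.le_one_iff_eq_zero_or_eq_one.mp h).imp
      (fun h => P.minj _ _ _ (h.trans hx.symm)) (fun h => P.minj _ _ _ (h.trans hμa.symm))
  rcases hopt with hm | hw
  · exact of_le_one (hμa ▸ hm a)
  · by_cases h : P.mrank a (ν.mu a) ≤ 1
    · exact of_le_one h
    · have hν_none : ν.mu a = none := P.minj a _ _ (by have := hν.mrank_le_none a; omega)
      refine Or.inr (hν_none.trans ?_)
      by_contra hne
      exact hμ.mu_ne_none_of_wrank_le hν hw (Ne.symm hne) hν_none

theorem nu_eq_or_eq_of_ranks [Finite W] (hμ : StableMatching P μ) (hν : StableMatching P ν)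
    (hopt : (∀ c, P.mrank c (ν.mu c) ≤ P.mrank c (μ.mu c)) ∨
      ∀ w, P.wrank w (ν.nu w) ≤ P.wrank w (μ.nu w))
    {b : W} {x : Option M} (hx : P.wrank b x = 0) (hμb : P.wrank b (μ.nu b) = 1)
    (hnone : P.wrank b none ≤ 2) : ν.nu b = x ∨ ν.nu b = μ.nu b :=
  hμ.flip.mu_eq_or_eq_of_ranks hν.flip hopt.symm hx hμb hnone

end StableMatching

section RevelationGame

variable {M W : Type} [Fintype M] [Fintype W]

@[simp]
theorem reportPref_mrank (r : ∀ i : M ⊕ W, Strat M W i) (a : M) (o : Option W) :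
    (reportPref r).mrank a o = r (Sum.inl a) o :=
  rfl

@[simp]
theorem reportPref_wrank (r : ∀ i : M ⊕ W, Strat M W i) (b : W) (o : Option M) :
    (reportPref r).wrank b o = r (Sum.inr b) o :=
  rfl

theorem stableMatching_of_optimal {Γ : (∀ i : M ⊕ W, Strat M W i) → Matching M W}
    (hΓ : (∀ r, IsMOptimalStable (reportPref r) (Γ r)) ∨
      (∀ r, IsWOptimalStable (reportPref r) (Γ r)))
    (r : ∀ i : M ⊕ W, Strat M W i) : StableMatching (reportPref r) (Γ r) :=
  hΓ.elim (fun h => (h r).1) (fun h => (h r).1)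

theorem rank_le_of_optimal {Γ : (∀ i : M ⊕ W, Strat M W i) → Matching M W}
    (hΓ : (∀ r, IsMOptimalStable (reportPref r) (Γ r)) ∨
      (∀ r, IsWOptimalStable (reportPref r) (Γ r)))
    {r : ∀ i : M ⊕ W, Strat M W i} {μ : Matching M W} (hμ : StableMatching (reportPref r) μ) :
    (∀ c, (reportPref r).mrank c ((Γ r).mu c) ≤ (reportPref r).mrank c (μ.mu c)) ∨
      ∀ w, (reportPref r).wrank w ((Γ r).nu w) ≤ (reportPref r).wrank w (μ.nu w) :=
  hΓ.imp (fun h => (h r).2 μ hμ) (fun h => (h r).2 μ hμ)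

variable [DecidableEq M] [DecidableEq W]

theorem expPay_pure (π : ∀ _ : M ⊕ W, (∀ j : M ⊕ W, Strat M W j) → ℝ) (i : M ⊕ W)
    (r : ∀ j : M ⊕ W, Strat M W j) : expPay π i (fun j => delta (r j)) = π i r := by
  unfold expPay
  rw [Finset.sum_eq_single r]
  · simp [delta]
  · intro s _ hs
    obtain ⟨j, hj⟩ := Function.ne_iff.mp hs
    rw [Finset.prod_eq_zero (Finset.mem_univ j) (if_neg hj), zero_mul]
  · simp

theorem CUWBR.update_mem {π : ∀ _ : M ⊕ W, (∀ j : M ⊕ W, Strat M W j) → ℝ}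
    {H : ∀ i : M ⊕ W, Set (Strat M W i)} (hcl : CUWBR π H) {r : ∀ i : M ⊕ W, Strat M W i}
    (hr : ∀ j, r j ∈ H j) {i : M ⊕ W} {h : Strat M W i}
    (hle : π i r ≤ π i (Function.update r i h)) : ∀ j, Function.update r i h j ∈ H j := by
  have hh : h ∈ H i := by
    refine hcl i h ⟨fun j => delta (r j), fun j => ⟨fun t => ?_, by simp [delta]⟩, ?_, ?_⟩
    · simp only [delta]
      split_ifs <;> norm_num
    · intro j t ht
      obtain rfl : t = r j := by_contra fun hne => ht (if_neg hne)
      exact hr j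
    · have hupd : Function.update (fun j => delta (r j)) i (delta h) =
          fun j => delta (Function.update r i h j) :=
        funext fun j => (Function.apply_update (fun _ => delta) r i h j).symm
      rwa [hupd, expPay_pure, expPay_pure]
  intro j
  by_cases hj : j = i
  · subst hj
    simpa using hh
  · simpa [Function.update_of_ne hj] using hr j

end RevelationGame

section AsymptoticStability

variable {M W : Type} [Fintype M] [Fintype W] [DecidableEq M] [DecidableEq W] {P : Pref M W}
  {um : M → ℕ → ℝ} {uw : W → ℕ → ℝ}
  {Γ : (∀ i : M ⊕ W, Strat M W i) → Matching M W}
  {μ : Matching M W} {H : ∀ i : M ⊕ W, Set (Strat M W i)} {r : ∀ i : M ⊕ W, Strat M W i}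

theorem CUWBR.update_inl_mem (hcl : CUWBR (algPayoff Γ P um uw) H)
    (hum : ∀ a x y, x < y → um a y < um a x) (hpp : ∀ r, (∀ i, r i ∈ H i) → Γ r = μ)
    (hr : ∀ i, r i ∈ H i) {a : M} {e : Strat M W (Sum.inl a)}
    (hle : P.mrank a ((Γ (Function.update r (Sum.inl a) e)).mu a) ≤ P.mrank a (μ.mu a)) :
    ∀ i, Function.update r (Sum.inl a) e i ∈ H i :=
  hcl.update_mem hr <| by
    show um a _ ≤ um a _
    rw [hpp r hr]
    exact StrictAnti.antitone (hum a) hle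

theorem CUWBR.update_inr_mem (hcl : CUWBR (algPayoff Γ P um uw) H)
    (huw : ∀ b x y, x < y → uw b y < uw b x) (hpp : ∀ r, (∀ i, r i ∈ H i) → Γ r = μ)
    (hr : ∀ i, r i ∈ H i) {b : W} {e : Strat M W (Sum.inr b)}
    (hle : P.wrank b ((Γ (Function.update r (Sum.inr b) e)).nu b) ≤ P.wrank b (μ.nu b)) :
    ∀ i, Function.update r (Sum.inr b) e i ∈ H i :=
  hcl.update_mem hr <| by
    show uw b _ ≤ uw b _
    rw [hpp r hr]
    exact StrictAnti.antitone (huw b) hle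

theorem mrank_mu_le_none (hstab : ∀ r, StableMatching (reportPref r) (Γ r))
    (hpp : ∀ r, (∀ i, r i ∈ H i) → Γ r = μ) (hcl : CUWBR (algPayoff Γ P um uw) H)
    (hum : ∀ a x y, x < y → um a y < um a x) (hr : ∀ i, r i ∈ H i) (a : M) :
    P.mrank a (μ.mu a) ≤ P.mrank a none := by
  obtain ⟨e, he⟩ := exists_rank_eq_zero (none : Option W)
  set r' := Function.update r (Sum.inl a) e
  have hsingle : (Γ r').mu a = none := (reportPref r').minj a _ _ <| by
    have := (hstab r').mrank_le_none a
    simp only [r', reportPref_mrank, Function.update_self] at this ⊢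
    omega
  by_contra! hlt
  have hr' := hcl.update_inl_mem hum hpp hr (e := e) (hsingle ▸ hlt.le)
  rw [hpp r' hr'] at hsingle
  exact lt_irrefl _ (hsingle ▸ hlt)

theorem wrank_nu_le_none (hstab : ∀ r, StableMatching (reportPref r) (Γ r))
    (hpp : ∀ r, (∀ i, r i ∈ H i) → Γ r = μ) (hcl : CUWBR (algPayoff Γ P um uw) H)
    (huw : ∀ b x y, x < y → uw b y < uw b x) (hr : ∀ i, r i ∈ H i) (b : W) :
    P.wrank b (μ.nu b) ≤ P.wrank b none := by
  obtain ⟨e, he⟩ := exists_rank_eq_zero (none : Option M)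
  set r' := Function.update r (Sum.inr b) e
  have hsingle : (Γ r').nu b = none := (reportPref r').winj b _ _ <| by
    have := (hstab r').wrank_le_none b
    simp only [r', reportPref_wrank, Function.update_self] at this ⊢
    omega
  by_contra! hlt
  have hr' := hcl.update_inr_mem huw hpp hr (e := e) (hsingle ▸ hlt.le)
  rw [hpp r' hr'] at hsingle
  exact lt_irrefl _ (hsingle ▸ hlt)

theorem wrank_nu_le_of_report_mrank_eq_zero (hstab : ∀ r, StableMatching (reportPref r) (Γ r))
    (hpp : ∀ r, (∀ i, r i ∈ H i) → Γ r = μ) (hcl : CUWBR (algPayoff Γ P um uw) H)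
    (huw : ∀ b x y, x < y → uw b y < uw b x) (hr : ∀ i, r i ∈ H i) {a : M} {b : W}
    (ha : (reportPref r).mrank a (some b) = 0) : P.wrank b (μ.nu b) ≤ P.wrank b (some a) := by
  obtain ⟨e, he⟩ := exists_rank_eq_zero (some a)
  set r' := Function.update r (Sum.inr b) e
  have hmatched : (Γ r').nu b = some a :=
    (hstab r').nu_eq_of_rank_eq_zero (by simpa [r'] using ha) (by simpa [r'] using he)
  by_contra! hlt
  have hr' := hcl.update_inr_mem huw hpp hr (e := e) (hmatched ▸ hlt.le)
  rw [hpp r' hr'] at hmatched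
  exact lt_irrefl _ (hmatched ▸ hlt)

theorem mrank_mu_le_of_report_wrank_eq_zero (hstab : ∀ r, StableMatching (reportPref r) (Γ r))
    (hpp : ∀ r, (∀ i, r i ∈ H i) → Γ r = μ) (hcl : CUWBR (algPayoff Γ P um uw) H)
    (hum : ∀ a x y, x < y → um a y < um a x) (hr : ∀ i, r i ∈ H i) {a : M} {b : W}
    (hb : (reportPref r).wrank b (some a) = 0) : P.mrank a (μ.mu a) ≤ P.mrank a (some b) := by
  obtain ⟨e, he⟩ := exists_rank_eq_zero (some b)
  set r' := Function.update r (Sum.inl a) e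
  have hmatched : (Γ r').mu a = some b := ((Γ r').nu_eq_some_iff).mp <|
    (hstab r').nu_eq_of_rank_eq_zero (by simpa [r'] using he) (by simpa [r'] using hb)
  by_contra! hlt
  have hr' := hcl.update_inl_mem hum hpp hr (e := e) (hmatched ▸ hlt.le)
  rw [hpp r' hr'] at hmatched
  exact lt_irrefl _ (hmatched ▸ hlt)

theorem not_blocks_of_report_wrank_le
    (hΓ : (∀ r, IsMOptimalStable (reportPref r) (Γ r)) ∨
      (∀ r, IsWOptimalStable (reportPref r) (Γ r)))
    (hpp : ∀ r, (∀ i, r i ∈ H i) → Γ r = μ) (hcl : CUWBR (algPayoff Γ P um uw) H)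
    (hum : ∀ a x y, x < y → um a y < um a x) (huw : ∀ b x y, x < y → uw b y < uw b x)
    (hr : ∀ i, r i ∈ H i) {a : M} {b : W}
    (hb : (reportPref r).wrank b (μ.nu b) ≤ (reportPref r).wrank b (some a)) :
    ¬ Blocks P μ a b := by
  rintro ⟨ha_lt, hb_lt⟩
  have hstab := stableMatching_of_optimal hΓ
  have hst : StableMatching (reportPref r) μ := hpp r hr ▸ hstab r
  obtain ⟨e, he_b, he_μ, he_μ_none, he_none⟩ :=
    exists_rank_eq_zero_eq_one (ne_of_apply_ne _ ha_lt.ne) (Option.some_ne_none b)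
  set r' := Function.update r (Sum.inl a) e
  have hst' : StableMatching (reportPref r') μ := by
    refine hst.of_mrank_agree (a := a) ?_ (fun c hc => ?_) ?_ fun d hd => ?_
    · funext d o
      simp [r']
    · funext o
      simp [r', hc]
    · simp only [r', reportPref_mrank, Function.update_self]
      omega
    · simp only [r', reportPref_mrank, Function.update_self] at hd
      obtain rfl : d = b := Option.some_injective _ (e.injective (Fin.ext (by omega)))
      exact hb
  have hout := hst'.mu_eq_or_eq_of_ranks (hstab r') (a := a) (x := some b)
    (rank_le_of_optimal hΓ hst')
    (by simpa [r'] using he_b) (by simpa [r'] using he_μ) (by simpa [r'] using he_none)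
  have hle : P.mrank a ((Γ r').mu a) ≤ P.mrank a (μ.mu a) := by
    rcases hout with h | h <;> rw [h]
    exact ha_lt.le
  have hr' := hcl.update_inl_mem hum hpp hr hle
  exact absurd hb_lt <| not_lt.mpr <|
    wrank_nu_le_of_report_mrank_eq_zero hstab hpp hcl huw hr' (by simpa [r'] using he_b)

theorem not_blocks_of_report_mrank_le
    (hΓ : (∀ r, IsMOptimalStable (reportPref r) (Γ r)) ∨
      (∀ r, IsWOptimalStable (reportPref r) (Γ r)))
    (hpp : ∀ r, (∀ i, r i ∈ H i) → Γ r = μ) (hcl : CUWBR (algPayoff Γ P um uw) H)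
    (hum : ∀ a x y, x < y → um a y < um a x) (huw : ∀ b x y, x < y → uw b y < uw b x)
    (hr : ∀ i, r i ∈ H i) {a : M} {b : W}
    (ha : (reportPref r).mrank a (μ.mu a) ≤ (reportPref r).mrank a (some b)) :
    ¬ Blocks P μ a b := by
  rintro ⟨ha_lt, hb_lt⟩
  have hstab := stableMatching_of_optimal hΓ
  have hst : StableMatching (reportPref r) μ := hpp r hr ▸ hstab r
  obtain ⟨e, he_a, he_μ, he_μ_none, he_none⟩ :=
    exists_rank_eq_zero_eq_one (ne_of_apply_ne _ hb_lt.ne) (Option.some_ne_none a)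
  set r' := Function.update r (Sum.inr b) e
  have hst' : StableMatching (reportPref r') μ := by
    refine hst.of_wrank_agree (b := b) ?_ (fun d hd => ?_) ?_ fun c hc => ?_
    · funext c o
      simp [r']
    · funext o
      simp [r', hd]
    · simp only [r', reportPref_wrank, Function.update_self]
      omega
    · simp only [r', reportPref_wrank, Function.update_self] at hc
      obtain rfl : c = a := Option.some_injective _ (e.injective (Fin.ext (by omega)))
      exact ha
  have hout := hst'.nu_eq_or_eq_of_ranks (hstab r') (b := b) (x := some a)
    (rank_le_of_optimal hΓ hst')
    (by simpa [r'] using he_a) (by simpa [r'] using he_μ) (by simpa [r'] using he_none)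
  have hle : P.wrank b ((Γ r').nu b) ≤ P.wrank b (μ.nu b) := by
    rcases hout with h | h <;> rw [h]
    exact hb_lt.le
  have hr' := hcl.update_inr_mem huw hpp hr hle
  exact absurd ha_lt <| not_lt.mpr <|
    mrank_mu_le_of_report_wrank_eq_zero hstab hpp hcl hum hr' (by simpa [r'] using he_a)

end AsymptoticStability

/-- Under an M-optimal (or W-optimal) stable matching algorithm,
any matching that is asymptotically stable under payoff-positive selection
dynamics — i.e. that admits a (nonempty) partial preimage closed under weakly
better replies — is a stable matching with respect to the true preferences. -/
theorem asymptotically_stable_is_stable {M W : Type} [Fintype M] [Fintype W]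
    [DecidableEq M] [DecidableEq W] (P : Pref M W)
    (um : M → ℕ → ℝ) (uw : W → ℕ → ℝ)
    (hum : ∀ a x y, x < y → um a y < um a x)
    (huw : ∀ b x y, x < y → uw b y < uw b x)
    (Γ : (∀ i : M ⊕ W, Strat M W i) → Matching M W)
    (hΓ : (∀ r, IsMOptimalStable (reportPref r) (Γ r)) ∨
          (∀ r, IsWOptimalStable (reportPref r) (Γ r)))
    (μ : Matching M W) (H : ∀ i : M ⊕ W, Set (Strat M W i))
    (hpp : ∀ r : ∀ i : M ⊕ W, Strat M W i, (∀ i, r i ∈ H i) → Γ r = μ)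
    (hne : ∃ r : ∀ i : M ⊕ W, Strat M W i, ∀ i, r i ∈ H i)
    (hcl : CUWBR (algPayoff Γ P um uw) H) :
    StableMatching P μ := by
  obtain ⟨r, hr⟩ := hne
  have hstab := stableMatching_of_optimal hΓ
  refine ⟨⟨fun a => not_lt.mpr (mrank_mu_le_none hstab hpp hcl hum hr a),
    fun b => not_lt.mpr (wrank_nu_le_none hstab hpp hcl huw hr b)⟩, fun a b => ?_⟩
  by_cases hb : (reportPref r).wrank b (μ.nu b) ≤ (reportPref r).wrank b (some a)
  · exact not_blocks_of_report_wrank_le hΓ hpp hcl hum huw hr hb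
  · have ha : (reportPref r).mrank a (μ.mu a) ≤ (reportPref r).mrank a (some b) :=
      le_of_not_gt fun ha => (hpp r hr ▸ hstab r).2 a b ⟨ha, not_le.mp hb⟩
    exact not_blocks_of_report_mrank_le hΓ hpp hcl hum huw hr ha
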